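/- Let g : ℝⁿ → ℝ be differentiable with L-Lipschitz gradient and h₁ : ℝⁿ → ℝ ∪ {+∞} a proper lower semicontinuous convex function whose subdifferential is uniformly bounded: there is c̄ > 0 with ‖v‖ ≤ c̄ for every v ∈ ∂h₁(x) and every x in the effective domain of h₁. Let x, x′ ∈ ℝⁿ, s = x′ − x ≠ 0, z = (∇g(x′) − ∇g(x)) + νs with 0 ≤ ν ≤ ν̄, sᵀz ≥ ν̲‖s‖² with ν̲ > 0, γ ∈ [γ̲, γ̄] with 0 < γ̲ ≤ γ̄, τ ∈ [τ̲, τ̄] with 0 < τ̲ ≤ τ̄, and set u₁ = √(γ/(sᵀz)) z and u₂ = (√τ/‖s‖) s; assume u₁ and u₂ are linearly independent. For any x̄ ∈ ℝⁿ define ζ(α) = x̄ − (α₁/τ)u₁ + α₂(τI + u₁u₁ᵀ)⁻¹u₂, 𝓛(α) = ( u₁ᵀ(x̄ + α₂(τI + u₁u₁ᵀ)⁻¹u₂ − Prox_{(1/τ)h₁}(ζ(α))) + α₁ , u₂ᵀ(x̄ − Prox_{(1/τ)h₁}(ζ(α))) + α₂ ), and Ψ(α) = ½‖𝓛(α)‖².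 Then Ψ is coercive: Ψ(α) → ∞ as ‖α‖ → ∞. -/

import Mathlib

open Matrix Filter Topology RealInnerProductSpace

noncomputable section

/-- `n`-dimensional Euclidean space. -/
abbrev Euc (n : ℕ) := EuclideanSpace ℝ (Fin n)

/-- `v` is a subgradient of the extended-real-valued convex function `φ` at `x`. -/
def ESubgradAt {n : ℕ} (φ : Euc n → EReal) (v x : Euc n) : Prop :=
  ∀ y : Euc n, φ x + ((⟪v, y - x⟫ : ℝ) : EReal) ≤ φ y

/-- `v` is a subgradient of the real-valued convex function `φ` at `x`. -/
def RSubgradAt {n : ℕ} (φ : Euc n → ℝ) (v x : Euc n) : Prop :=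
  ∀ y : Euc n, φ x + ⟪v, y - x⟫ ≤ φ y

/-- Convexity of an extended-real-valued function. -/
def EConvexF {n : ℕ} (φ : Euc n → EReal) : Prop :=
  ∀ x y : Euc n, ∀ a b : ℝ, 0 ≤ a → 0 ≤ b → a + b = 1 →
    φ (a • x + b • y) ≤ (a : EReal) * φ x + (b : EReal) * φ y

/-- Properness of an extended-real-valued function: never `⊥` and finite somewhere. -/
def ProperF {n : ℕ} (φ : Euc n → EReal) : Prop :=
  (∀ x, φ x ≠ ⊥) ∧ (∃ x, φ x ≠ ⊤)

/-- The quadratic form `uᵀ B u`. -/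
def quadF {n : ℕ} (B : Matrix (Fin n) (Fin n) ℝ) (u : Euc n) : ℝ :=
  ⟪u, (Matrix.toEuclideanLin B) u⟫

/-- The scaled norm `‖u‖_B = √(uᵀ B u)`. -/
def MNorm {n : ℕ} (B : Matrix (Fin n) (Fin n) ℝ) (u : Euc n) : ℝ :=
  Real.sqrt (quadF B u)

/-- The objective `f = g + h₁ - h₂`. -/
def fObj {n : ℕ} (g : Euc n → ℝ) (h₁ : Euc n → EReal) (h₂ : Euc n → ℝ) (x : Euc n) : EReal :=
  (g x : EReal) + h₁ x - (h₂ x : EReal)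

/-- `p` is the proximal point `Prox_{(1/τ)h₁}(y)`, i.e. the minimizer of
`(1/τ)h₁(·) + ½‖· - y‖²`. -/
def IsProxPt {n : ℕ} (τ : ℝ) (h₁ : Euc n → EReal) (y p : Euc n) : Prop :=
  ∀ w : Euc n, ((τ⁻¹ : ℝ) : EReal) * h₁ p + ((‖p - y‖ ^ 2 / 2 : ℝ) : EReal) ≤
    ((τ⁻¹ : ℝ) : EReal) * h₁ w + ((‖w - y‖ ^ 2 / 2 : ℝ) : EReal)

/-- The matrix `τI + u₁u₁ᵀ`. -/
def Amat {n : ℕ} (τ : ℝ) (u₁ : Euc n) : Matrix (Fin n) (Fin n) ℝ :=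
  τ • (1 : Matrix (Fin n) (Fin n) ℝ) + Matrix.vecMulVec (u₁ : Fin n → ℝ) (u₁ : Fin n → ℝ)

/-- The matrix `B = τI + u₁u₁ᵀ - u₂u₂ᵀ`. -/
def Bprox {n : ℕ} (τ : ℝ) (u₁ u₂ : Euc n) : Matrix (Fin n) (Fin n) ℝ :=
  Amat τ u₁ - Matrix.vecMulVec (u₂ : Fin n → ℝ) (u₂ : Fin n → ℝ)

/-- `ζ(α) = x̄ - (α₁/τ)u₁ + α₂(τI + u₁u₁ᵀ)⁻¹u₂`. -/
def zetaMap {n : ℕ} (τ : ℝ) (u₁ u₂ xb : Euc n) (α : ℝ × ℝ) : Euc n :=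
  xb - (α.1 / τ) • u₁ + α.2 • (Matrix.toEuclideanLin (Amat τ u₁)⁻¹) u₂

/-- The semi-smooth map `𝓛 : ℝ² → ℝ²`, where `P = Prox_{(1/τ)h₁}`. -/
def Lmap {n : ℕ} (τ : ℝ) (u₁ u₂ xb : Euc n) (P : Euc n → Euc n) (α : ℝ × ℝ) : ℝ × ℝ :=
  (⟪u₁, xb + α.2 • (Matrix.toEuclideanLin (Amat τ u₁)⁻¹) u₂ - P (zetaMap τ u₁ u₂ xb α)⟫ + α.1,
   ⟪u₂, xb - P (zetaMap τ u₁ u₂ xb α)⟫ + α.2)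

/-- `p` is the scaled proximal point `Prox_{h₁}^{B}(y)`, i.e. the minimizer of
`h₁(·) + ½‖· - y‖_B²`. -/
def IsScaledProxPt {n : ℕ} (B : Matrix (Fin n) (Fin n) ℝ) (h₁ : Euc n → EReal)
    (y p : Euc n) : Prop :=
  ∀ w : Euc n, h₁ p + ((quadF B (p - y) / 2 : ℝ) : EReal) ≤
    h₁ w + ((quadF B (w - y) / 2 : ℝ) : EReal)

/-!
Write `w = (τI + u₁u₁ᵀ)⁻¹u₂` and `e(α) = Prox(ζ(α)) - ζ(α)`. Expanding `ζ`, the map `𝓛` is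
`α ↦ Mα - (u₁ᵀe(α), u₂ᵀe(α))` with the lower triangular matrix
`M = [[1 + ‖u₁‖²/τ, 0], [u₁ᵀu₂/τ, 1 - u₂ᵀw]]`. The optimality condition of the prox says that
`τ(ζ - Prox ζ)` is a subgradient of `h₁` at `Prox ζ`, so `‖e(α)‖ ≤ c̄/τ` and `𝓛` stays within bounded
distance of `M`. Since `‖u₂‖² = τ`, one has `τ(1 - u₂ᵀw) = (u₁ᵀu₂)²/(τ + ‖u₁‖²)`, and `u₁ᵀu₂ > 0`
by the curvature condition `sᵀz > 0`; so `M` is invertible and `‖𝓛(α)‖` grows linearly in `‖α‖`.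
-/

namespace IsProxPt

variable {n : ℕ} {τ : ℝ} {h₁ : Euc n → EReal} {y p : Euc n}

lemma ne_top (hτ : 0 < τ) (hprop : ProperF h₁) (hp : IsProxPt τ h₁ y p) : h₁ p ≠ ⊤ := by
  obtain ⟨x₀, hx₀⟩ := hprop.2
  intro htop
  have hmin := hp x₀
  rw [htop, EReal.mul_top_of_pos (by exact_mod_cast inv_pos.2 hτ), EReal.top_add_coe,
    top_le_iff] at hmin
  lift h₁ x₀ to ℝ using ⟨hx₀, hprop.1 x₀⟩ with r
  exact EReal.coe_ne_top _ (by exact_mod_cast hmin)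

lemma le_of_le_coe (hτ : 0 < τ) (hp : IsProxPt τ h₁ y p) {a b : ℝ} (ha : h₁ p = a) {w : Euc n}
    (hb : h₁ w ≤ b) : τ⁻¹ * a + ‖p - y‖ ^ 2 / 2 ≤ τ⁻¹ * b + ‖w - y‖ ^ 2 / 2 := by
  have hτ' : (0 : EReal) ≤ ((τ⁻¹ : ℝ) : EReal) := by exact_mod_cast (inv_pos.2 hτ).le
  have h := (hp w).trans
    (by gcongr : _ ≤ ((τ⁻¹ : ℝ) : EReal) * b + ((‖w - y‖ ^ 2 / 2 : ℝ) : EReal))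
  rw [ha] at h
  exact_mod_cast h

lemma subgradAt (hτ : 0 < τ) (hprop : ProperF h₁) (hconv : EConvexF h₁)
    (hp : IsProxPt τ h₁ y p) : ESubgradAt h₁ (τ • (y - p)) p := by
  intro w
  rcases eq_or_ne (h₁ w) ⊤ with hw | hw
  · simp [hw]
  lift h₁ p to ℝ using ⟨hp.ne_top hτ hprop, hprop.1 p⟩ with a ha
  lift h₁ w to ℝ using ⟨hw, hprop.1 w⟩ with b hb
  -- compare `p` with the points `p + t • (w - p)` of the segment towards `w`, then let `t → 0`
  have hseg : ∀ t ∈ Set.Ioc (0 : ℝ) 1,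
      τ⁻¹ * (a - b) ≤ ⟪p - y, w - p⟫ + t / 2 * ‖w - p‖ ^ 2 := by
    rintro t ⟨ht0, ht1⟩
    have hconv_t : h₁ (p + t • (w - p)) ≤ ((1 - t) * a + t * b : ℝ) := by
      have h := hconv p w (1 - t) t (by linarith) ht0.le (by ring)
      rw [← ha, ← hb, ← EReal.coe_mul, ← EReal.coe_mul, ← EReal.coe_add] at h
      convert h using 2
      module
    have hmin := hp.le_of_le_coe hτ ha.symm hconv_t
    have hnorm : ‖p + t • (w - p) - y‖ ^ 2
        = ‖p - y‖ ^ 2 + 2 * (t * ⟪p - y, w - p⟫) + t ^ 2 * ‖w - p‖ ^ 2 := by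
      rw [show p + t • (w - p) - y = (p - y) + t • (w - p) by abel, norm_add_sq_real,
        real_inner_smul_right, norm_smul, Real.norm_of_nonneg ht0.le, mul_pow]
    refine le_of_mul_le_mul_left ?_ ht0
    nlinarith
  have hlim : τ⁻¹ * (a - b) ≤ ⟪p - y, w - p⟫ := by
    have hcont : Continuous fun t : ℝ => ⟪p - y, w - p⟫ + t / 2 * ‖w - p‖ ^ 2 := by fun_prop
    refine ge_of_tendsto (tendsto_nhdsWithin_of_tendsto_nhds (hcont.tendsto' 0 _ (by simp)))
      (?_ : ∀ᶠ t in 𝓝[>] (0 : ℝ), _)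
    filter_upwards [Ioc_mem_nhdsGT zero_lt_one] using hseg
  rw [← EReal.coe_add, EReal.coe_le_coe_iff, real_inner_smul_left, ← neg_sub p y, inner_neg_left]
  rw [inv_mul_le_iff₀ hτ] at hlim
  linarith

lemma norm_sub_le (hτ : 0 < τ) (hprop : ProperF h₁) (hconv : EConvexF h₁) {cbar : ℝ}
    (hbdd : ∀ x : Euc n, h₁ x ≠ ⊤ → ∀ v : Euc n, ESubgradAt h₁ v x → ‖v‖ ≤ cbar)
    (hp : IsProxPt τ h₁ y p) : ‖p - y‖ ≤ cbar / τ := by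
  have h := hbdd p (hp.ne_top hτ hprop) _ (hp.subgradAt hτ hprop hconv)
  rw [norm_smul, Real.norm_of_nonneg hτ.le, norm_sub_rev] at h
  rwa [le_div_iff₀' hτ]

end IsProxPt

section Amat

variable {n : ℕ} {τ : ℝ}

lemma toEuclideanLin_Amat_apply (u v : Euc n) :
    Matrix.toEuclideanLin (Amat τ u) v = τ • v + ⟪u, v⟫ • u := by
  ext i
  simp [Amat, Matrix.vecMulVec_mulVec, PiLp.inner_apply, dotProduct, mul_comm]

lemma posDef_Amat (hτ : 0 < τ) (u : Euc n) : (Amat τ u).PosDef :=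
  (Matrix.PosDef.one.smul hτ).add_posSemidef (Matrix.posSemidef_vecMulVec_self_star _)

lemma Amat_apply_inv_apply (hτ : 0 < τ) (u v : Euc n) :
    Matrix.toEuclideanLin (Amat τ u) (Matrix.toEuclideanLin (Amat τ u)⁻¹ v) = v := by
  rw [← LinearMap.comp_apply, ← Matrix.toLpLin_mul_same, Matrix.mul_nonsing_inv _
    ((Matrix.isUnit_iff_isUnit_det _).1 (posDef_Amat hτ u).isUnit), Matrix.toLpLin_one,
    LinearMap.id_apply]

end Amat

section InnerProductSpace

variable {E : Type*} [NormedAddCommGroup E] [InnerProductSpace ℝ E]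

lemma one_sub_inner_pos_of_smul_add_inner_smul_eq {τ : ℝ} (hτ : 0 < τ) {u₁ u₂ w : E}
    (hw : τ • w + ⟪u₁, w⟫ • u₁ = u₂) (hu₂ : ‖u₂‖ ^ 2 ≤ τ) (h₁₂ : ⟪u₁, u₂⟫ ≠ 0) :
    0 < 1 - ⟪u₂, w⟫ := by
  have h₁ : ⟪u₁, u₂⟫ = ⟪u₁, w⟫ * (τ + ‖u₁‖ ^ 2) := by
    rw [← hw, inner_add_right, real_inner_smul_right, real_inner_smul_right,
      real_inner_self_eq_norm_sq]
    ring
  have h₂ : ‖u₂‖ ^ 2 = τ * ⟪u₂, w⟫ + ⟪u₁, w⟫ * ⟪u₁, u₂⟫ := by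
    rw [← real_inner_self_eq_norm_sq]
    nth_rw 2 [← hw]
    rw [inner_add_right, real_inner_smul_right, real_inner_smul_right, real_inner_comm u₁ u₂]
  have hw₁ : ⟪u₁, w⟫ ≠ 0 := by
    rintro h
    exact h₁₂ (by rw [h₁, h, zero_mul])
  have : 0 < τ * (1 - ⟪u₂, w⟫) := by
    rw [h₁] at h₂
    nlinarith [mul_pos (pow_pos (abs_pos.2 hw₁) 2) (by positivity : 0 < τ + ‖u₁‖ ^ 2),
      sq_abs ⟪u₁, w⟫]
  exact pos_of_mul_pos_right this hτ.le

lemma norm_inner_prod_le (u₁ u₂ e : E) :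
    ‖((⟪u₁, e⟫ : ℝ), (⟪u₂, e⟫ : ℝ))‖ ≤ max ‖u₁‖ ‖u₂‖ * ‖e‖ := by
  rw [norm_prod_le_iff]
  constructor
  · exact (norm_inner_le_norm u₁ e).trans (by gcongr; exact le_max_left _ _)
  · exact (norm_inner_le_norm u₂ e).trans (by gcongr; exact le_max_right _ _)

end InnerProductSpace

section Coercive

lemma norm_sq_le_fst_sq_add_snd_sq (p : ℝ × ℝ) : ‖p‖ ^ 2 ≤ p.1 ^ 2 + p.2 ^ 2 := by
  rw [Prod.norm_def, Real.norm_eq_abs, Real.norm_eq_abs]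
  rcases le_total |p.1| |p.2| with h | h
  · rw [max_eq_right h, sq_abs]
    nlinarith
  · rw [max_eq_left h, sq_abs]
    nlinarith

variable {E F : Type*} [SeminormedAddCommGroup E] [SeminormedAddCommGroup F]

lemma exists_forall_le_norm_of_tendsto_cobounded {f : E → ℝ}
    (hf : Tendsto f (Bornology.cobounded E) atTop) (C : ℝ) :
    ∃ R, ∀ x, R ≤ ‖x‖ → C ≤ f x := by
  rw [← comap_norm_atTop] at hf
  simpa using (atTop_basis.comap norm).eventually_iff.1 (hf.eventually_ge_atTop C)

lemma AntilipschitzWith.tendsto_norm_cobounded_of_norm_sub_le {K : NNReal} {M f : E → F}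
    (hM : AntilipschitzWith K M) {B : ℝ} (hfM : ∀ x, ‖f x - M x‖ ≤ B) :
    Tendsto (fun x => ‖f x‖) (Bornology.cobounded E) atTop := by
  refine tendsto_atTop_mono (fun x => ?_) (tendsto_atTop_add_const_right _ (-B)
    (tendsto_norm_cobounded_atTop.comp hM.tendsto_cobounded))
  have h := norm_sub_norm_le (M x) (f x)
  rw [norm_sub_rev] at h
  simp only [Function.comp_apply]
  linarith [hfM x]

end Coercive

def lowerTriangular (a b c : ℝ) : ℝ × ℝ →ₗ[ℝ] ℝ × ℝ :=
  (a • LinearMap.fst ℝ ℝ ℝ).prod (b • LinearMap.fst ℝ ℝ ℝ + c • LinearMap.snd ℝ ℝ ℝ)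

@[simp]
lemma lowerTriangular_apply (a b c : ℝ) (α : ℝ × ℝ) :
    lowerTriangular a b c α = (a * α.1, b * α.1 + c * α.2) := rfl

lemma ker_lowerTriangular {a b c : ℝ} (ha : a ≠ 0) (hc : c ≠ 0) :
    LinearMap.ker (lowerTriangular a b c) = ⊥ := by
  refine LinearMap.ker_eq_bot'.2 fun α hα => ?_
  obtain ⟨h₁, h₂⟩ := Prod.mk_eq_zero.1 ((lowerTriangular_apply a b c α).symm.trans hα)
  have hα₁ : α.1 = 0 := (mul_eq_zero.1 h₁).resolve_left ha
  rw [hα₁, mul_zero, zero_add] at h₂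
  exact Prod.ext hα₁ ((mul_eq_zero.1 h₂).resolve_left hc)

lemma Lmap_eq_lowerTriangular_sub {n : ℕ} (τ : ℝ) (u₁ u₂ xb : Euc n) (P : Euc n → Euc n)
    (α : ℝ × ℝ) :
    Lmap τ u₁ u₂ xb P α =
      lowerTriangular (1 + ‖u₁‖ ^ 2 / τ) (⟪u₁, u₂⟫ / τ)
          (1 - ⟪u₂, Matrix.toEuclideanLin (Amat τ u₁)⁻¹ u₂⟫) α -
        (⟪u₁, P (zetaMap τ u₁ u₂ xb α) - zetaMap τ u₁ u₂ xb α⟫,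
          ⟪u₂, P (zetaMap τ u₁ u₂ xb α) - zetaMap τ u₁ u₂ xb α⟫) := by
  set w := Matrix.toEuclideanLin (Amat τ u₁)⁻¹ u₂
  set ζ := zetaMap τ u₁ u₂ xb α
  have hζ : ζ = xb - (α.1 / τ) • u₁ + α.2 • w := rfl
  have h₁ : xb + α.2 • w - P ζ = (α.1 / τ) • u₁ - (P ζ - ζ) := by rw [hζ]; module
  have h₂ : xb - P ζ = (α.1 / τ) • u₁ - α.2 • w - (P ζ - ζ) := by rw [hζ]; module
  ext
  · change ⟪u₁, xb + α.2 • w - P ζ⟫ + α.1 = _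
    rw [h₁, Prod.fst_sub, lowerTriangular_apply, inner_sub_right, real_inner_smul_right,
      real_inner_self_eq_norm_sq]
    ring
  · change ⟪u₂, xb - P ζ⟫ + α.2 = _
    rw [h₂, Prod.snd_sub, lowerTriangular_apply, inner_sub_right, inner_sub_right,
      real_inner_smul_right, real_inner_smul_right, real_inner_comm u₁ u₂]
    ring

theorem merit_function_coercive_general
    {n : ℕ} (cbar νlo γlo τlo γ τ : ℝ)
    (h₁ : Euc n → EReal) (P : Euc n → Euc n)
    (s z u₁ u₂ xb : Euc n)
    (hprop : ProperF h₁) (hconv : EConvexF h₁)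
    (hbddsub : ∀ y : Euc n, h₁ y ≠ ⊤ → ∀ v : Euc n, ESubgradAt h₁ v y → ‖v‖ ≤ cbar)
    (hs0 : s ≠ 0)
    (hνlo : 0 < νlo)
    (hcurv : νlo * ‖s‖ ^ 2 ≤ ⟪s, z⟫)
    (hγlo : 0 < γlo) (hγ1 : γlo ≤ γ)
    (hτlo : 0 < τlo) (hτ1 : τlo ≤ τ)
    (hu₁ : u₁ = Real.sqrt (γ / (⟪s, z⟫ : ℝ)) • z)
    (hu₂ : u₂ = (Real.sqrt τ / ‖s‖) • s)
    (hP : ∀ y : Euc n, IsProxPt τ h₁ y (P y)) :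
    ∀ C : ℝ, ∃ R : ℝ, ∀ α : ℝ × ℝ, R ≤ ‖α‖ →
      C ≤ ((Lmap τ u₁ u₂ xb P α).1 ^ 2 + (Lmap τ u₁ u₂ xb P α).2 ^ 2) / 2 := by
  have hτ : 0 < τ := hτlo.trans_le hτ1
  have hs : 0 < ‖s‖ := norm_pos_iff.2 hs0
  have hsz : 0 < ⟪s, z⟫ := (by positivity : 0 < νlo * ‖s‖ ^ 2).trans_le hcurv
  have hu₂_sq : ‖u₂‖ ^ 2 = τ := by
    rw [hu₂, norm_smul, Real.norm_of_nonneg (by positivity), div_mul_cancel₀ _ hs.ne',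
      Real.sq_sqrt hτ.le]
  have hu₁₂ : 0 < ⟪u₁, u₂⟫ := by
    rw [hu₁, hu₂, real_inner_smul_left, real_inner_smul_right, real_inner_comm s z]
    exact mul_pos (Real.sqrt_pos.2 (div_pos (hγlo.trans_le hγ1) hsz))
      (mul_pos (div_pos (Real.sqrt_pos.2 hτ) hs) hsz)
  have hw := Amat_apply_inv_apply hτ u₁ u₂
  rw [toEuclideanLin_Amat_apply] at hw
  obtain ⟨K, -, hK⟩ := LinearMap.exists_antilipschitzWith _ (ker_lowerTriangular
    (b := ⟪u₁, u₂⟫ / τ) (by positivity : 1 + ‖u₁‖ ^ 2 / τ ≠ 0)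
    (one_sub_inner_pos_of_smul_add_inner_smul_eq hτ hw hu₂_sq.le hu₁₂.ne').ne')
  have hLmap := hK.tendsto_norm_cobounded_of_norm_sub_le (f := Lmap τ u₁ u₂ xb P)
    (B := max ‖u₁‖ ‖u₂‖ * (cbar / τ)) fun α => by
      rw [Lmap_eq_lowerTriangular_sub, sub_sub_cancel_left, norm_neg]
      exact (norm_inner_prod_le _ _ _).trans
        (by gcongr; exact (hP _).norm_sub_le hτ hprop hconv hbddsub)
  exact exists_forall_le_norm_of_tendsto_cobounded (tendsto_atTop_mono
    (fun α => div_le_div_of_nonneg_right (norm_sq_le_fst_sq_add_snd_sq _) zero_le_two)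
    (((tendsto_pow_atTop two_ne_zero).comp hLmap).atTop_div_const two_pos))

/-- coercivity of the merit function `Ψ(α) = ½‖𝓛(α)‖²` for the BFGS
choice `u₁ = √(γ/(sᵀz)) z`, `u₂ = (√τ/‖s‖) s`, when the subdifferential of `h₁` is
uniformly bounded on its effective domain. -/
theorem merit_function_coercive
    {n : ℕ} (L cbar νlo νhi γlo γhi τlo τhi ν γ τ : ℝ)
    (g : Euc n → ℝ) (g' : Euc n → Euc n)
    (h₁ : Euc n → EReal) (P : Euc n → Euc n)
    (x x' s z u₁ u₂ xb : Euc n)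
    (hL : 0 ≤ L)
    (hg : ∀ y : Euc n, HasGradientAt g (g' y) y)
    (hLip : ∀ u v : Euc n, ‖g' u - g' v‖ ≤ L * ‖u - v‖)
    (hprop : ProperF h₁) (hlsc : LowerSemicontinuous h₁) (hconv : EConvexF h₁)
    (hcbar : 0 < cbar)
    (hbddsub : ∀ y : Euc n, h₁ y ≠ ⊤ → ∀ v : Euc n, ESubgradAt h₁ v y → ‖v‖ ≤ cbar)
    (hs : s = x' - x) (hs0 : s ≠ 0)
    (hz : z = (g' x' - g' x) + ν • s)
    (hν0 : 0 ≤ ν) (hνhi : ν ≤ νhi)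
    (hνlo : 0 < νlo)
    (hcurv : νlo * ‖s‖ ^ 2 ≤ ⟪s, z⟫)
    (hγlo : 0 < γlo) (hγ1 : γlo ≤ γ) (hγ2 : γ ≤ γhi)
    (hτlo : 0 < τlo) (hτ1 : τlo ≤ τ) (hτ2 : τ ≤ τhi)
    (hu₁ : u₁ = Real.sqrt (γ / (⟪s, z⟫ : ℝ)) • z)
    (hu₂ : u₂ = (Real.sqrt τ / ‖s‖) • s)
    (hind : LinearIndependent ℝ ![u₁, u₂])
    (hP : ∀ y : Euc n, IsProxPt τ h₁ y (P y)) :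
    ∀ C : ℝ, ∃ R : ℝ, ∀ α : ℝ × ℝ, R ≤ ‖α‖ →
      C ≤ ((Lmap τ u₁ u₂ xb P α).1 ^ 2 + (Lmap τ u₁ u₂ xb P α).2 ^ 2) / 2 :=
  merit_function_coercive_general cbar νlo γlo τlo γ τ h₁ P s z u₁ u₂ xb hprop hconv hbddsub hs0
    hνlo hcurv hγlo hγ1 hτlo hτ1 hu₁ hu₂ hP
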